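/- arXiv:1803.05332 — 3 statements merged into one kernel-verified Lean document; each statement's English description precedes it below -/
import Mathlib

section
/- Every polynomial u⁰ of degree ≤ 2 composed with the characteristic flow of a constant velocity, u(x,t) = u⁰(x − Vt), is reproduced exactly (with zero truncation error) by the semi-implicit κ-scheme U_i^{n+1} + τV(∂ₓ⁻U_i^{n+1} − ½∂ₓᵏU_{i−1}^{n+1}) = U_i^n − ½τV ∂ₓᵏU_i^n for any κ, any h > 0, and any τ > 0, assuming V > 0. -/
/-! For a quadratic `q x = a x² + b x + c` every difference quotient in the scheme is an affine
function of the point: the backward quotient is `q'(x) - a h` and the κ-quotient is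
`q'(x) + κ a h`. The κ-corrections on both sides of the scheme then cancel, and what remains is
the exact second-order Taylor expansion `q (x - s) = q x - s q'(x) + a s²` along the
characteristic, with `s = V τ`. -/

/-- The paper's `∂ₓᵏ q (x)` on a mesh of size `h`. -/
noncomputable def kappaDiff (κ h : ℝ) (q : ℝ → ℝ) (x : ℝ) : ℝ :=
  ((1 - κ) * (q x - q (x - h)) + (1 + κ) * (q (x + h) - q x)) / (2 * h)

section Quadratic

variable {a b c : ℝ} {q : ℝ → ℝ}

theorem backwardDiff_quadratic (hq : ∀ x, q x = a * x ^ 2 + b * x + c) {h : ℝ} (hh : h ≠ 0)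
    (x : ℝ) : (q x - q (x - h)) / h = 2 * a * x + b - a * h := by
  rw [hq, hq, div_eq_iff hh]
  ring

theorem kappaDiff_quadratic (hq : ∀ x, q x = a * x ^ 2 + b * x + c) (κ : ℝ) {h : ℝ}
    (hh : h ≠ 0) (x : ℝ) : kappaDiff κ h q x = 2 * a * x + b + κ * a * h := by
  rw [kappaDiff, hq, hq, hq, div_eq_iff (mul_ne_zero two_ne_zero hh)]
  ring

theorem quadratic_sub (hq : ∀ x, q x = a * x ^ 2 + b * x + c) (x s : ℝ) :
    q (x - s) = q x - s * (2 * a * x + b) + a * s ^ 2 := by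
  rw [hq, hq]
  ring

theorem kappaScheme_exact_quadratic (hq : ∀ x, q x = a * x ^ 2 + b * x + c) (κ : ℝ) {h : ℝ}
    (hh : h ≠ 0) (x s : ℝ) :
    q (x - s) + s * ((q (x - s) - q (x - s - h)) / h - 1 / 2 * kappaDiff κ h q (x - s - h)) =
      q x - 1 / 2 * s * kappaDiff κ h q x := by
  rw [backwardDiff_quadratic hq hh, kappaDiff_quadratic hq κ hh, kappaDiff_quadratic hq κ hh,
    quadratic_sub hq]
  ring

end Quadratic

theorem stmt6_general (a b c V h τ κ : ℝ) (hh : 0 < h)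
    (u0 : ℝ → ℝ) (hu0 : ∀ x, u0 x = a * x ^ 2 + b * x + c)
    (U : ℤ → ℕ → ℝ) (hU : ∀ i n, U i n = u0 ((i : ℝ) * h - V * ((n : ℝ) * τ)))
    (Dκ : ℤ → ℕ → ℝ)
    (hDκ : ∀ i n, Dκ i n =
      ((1 - κ) * (U i n - U (i - 1) n) + (1 + κ) * (U (i + 1) n - U i n)) / (2 * h)) :
    ∀ (i : ℤ) (n : ℕ),
      U i (n + 1) + τ * V * ((U i (n + 1) - U (i - 1) (n + 1)) / h - (1 / 2) * Dκ (i - 1) (n + 1)) =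
        U i n - (1 / 2) * τ * V * Dκ i n := by
  have hDκ_grid : ∀ i n, Dκ i n = kappaDiff κ h u0 ((i : ℝ) * h - V * ((n : ℝ) * τ)) := by
    intro i n
    rw [hDκ, hU, hU, hU, kappaDiff]
    push_cast
    ring_nf
  intro i n
  rw [hDκ_grid, hDκ_grid, hU, hU, hU]
  convert kappaScheme_exact_quadratic hu0 κ hh.ne' ((i : ℝ) * h - V * ((n : ℝ) * τ)) (τ * V)
    using 3 <;> push_cast <;> ring_nf

/-- Quadratic exact solutions u(x,t) = u⁰(x − Vt) are reproduced exactly by the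
semi-implicit κ-scheme for any κ, h > 0, τ > 0, V > 0. -/
theorem stmt6 (a b c V h τ κ : ℝ) (hV : 0 < V) (hh : 0 < h) (hτ : 0 < τ)
    (u0 : ℝ → ℝ) (hu0 : ∀ x, u0 x = a * x ^ 2 + b * x + c)
    (U : ℤ → ℕ → ℝ) (hU : ∀ i n, U i n = u0 ((i : ℝ) * h - V * ((n : ℝ) * τ)))
    (Dκ : ℤ → ℕ → ℝ)
    (hDκ : ∀ i n, Dκ i n =
      ((1 - κ) * (U i n - U (i - 1) n) + (1 + κ) * (U (i + 1) n - U i n)) / (2 * h)) :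
    ∀ (i : ℤ) (n : ℕ),
      U i (n + 1) + τ * V * ((U i (n + 1) - U (i - 1) (n + 1)) / h - (1 / 2) * Dκ (i - 1) (n + 1)) =
        U i n - (1 / 2) * τ * V * Dκ i n :=
  stmt6_general a b c V h τ κ hh u0 hu0 U hU Dκ hDκ
end

section
/- For the semi-implicit scheme with κ = sign(V) (scheme (20)), the von Neumann amplification factor S(θ) = (1 − (|C|/2)(e^{iθ·sign(C)} − 1)) / (1 + (|C|/2)(1 − e^{−iθ·sign(C)})) satisfies |S(θ)| = 1 for every θ ∈ ℝ and every Courant number C ∈ ℝ. -/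
open Complex

/-! The denominator of the amplification factor is the complex conjugate of its numerator
`w = 1 + a (1 - e^{ix})` (with `a = |C|/2 ≥ 0`, `x = θ sign C`), since `e^{-ix}` is the conjugate
of `e^{ix}`. A quotient `w / w̄` has modulus one as soon as `w ≠ 0`, and here `Re w ≥ 1` because
`Re e^{ix} ≤ 1`. -/

theorem Complex.norm_div_conj_self {w : ℂ} (hw : w ≠ 0) : ‖w / (starRingEnd ℂ) w‖ = 1 := by
  rw [norm_div, Complex.norm_conj, div_self (norm_ne_zero_iff.mpr hw)]

theorem Complex.exp_neg_I_mul_ofReal (x : ℝ) :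
    exp (-(I * x)) = (starRingEnd ℂ) (exp (I * x)) := by
  rw [← exp_conj, map_mul, conj_I, conj_ofReal, neg_mul]

theorem Complex.one_le_re_one_sub_mul_sub_one {a : ℝ} (ha : 0 ≤ a) {z : ℂ} (hz : ‖z‖ ≤ 1) :
    1 ≤ (1 - a * (z - 1)).re := by
  have hre : z.re ≤ 1 := (re_le_norm z).trans hz
  simp only [sub_re, one_re, re_ofReal_mul]
  nlinarith

theorem norm_amplificationFactor_eq_one {a : ℝ} (ha : 0 ≤ a) (x : ℝ) :
    ‖(1 - a * (exp (I * x) - 1)) / (1 + a * (1 - exp (-(I * x))))‖ = 1 := by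
  have hden : 1 + a * (1 - exp (-(I * x))) = (starRingEnd ℂ) (1 - a * (exp (I * x) - 1)) := by
    simp only [exp_neg_I_mul_ofReal, map_sub, map_mul, map_one, conj_ofReal]
    ring
  have hnum : 1 - a * (exp (I * x) - 1) ≠ 0 := by
    have hexp : ‖exp (I * x)‖ ≤ 1 := by rw [mul_comm, norm_exp_ofReal_mul_I]
    intro h
    have hre := one_le_re_one_sub_mul_sub_one ha hexp
    rw [h, zero_re] at hre
    norm_num at hre
  rw [hden, norm_div_conj_self hnum]

/-- The amplification factor of the semi-implicit scheme with κ = sign(V) has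
modulus exactly 1 for every θ and every Courant number C. -/
theorem stmt8 (C θ : ℝ) :
    ‖((1 - (|C| / 2 : ℝ) * (Complex.exp (Complex.I * θ * Real.sign C) - 1)) /
          (1 + (|C| / 2 : ℝ) * (1 - Complex.exp (-(Complex.I * θ * Real.sign C)))))‖ = 1 := by
  have hphase : I * θ * Real.sign C = I * ↑(θ * Real.sign C) := by push_cast; ring
  rw [hphase]
  exact norm_amplificationFactor_eq_one (by positivity) _
end

section
/- For the semi-implicit κ-scheme with V > 0 and κ ≤ 1, the von Neumann amplification factor S(θ) = (1 − (C/2)g(θ)) / (1 + C(1 − e^{−iθ}) − (C/2)e^{−iθ}g(θ)), where g(θ) = ((1−κ)(1 − e^{−iθ}) + (1+κ)(e^{iθ} − 1))/2, satisfies |S(θ)| ≤ 1 for all θ ∈ ℝ and all Courant numbers C = τV/h > 0 (unconditional stability). -/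
open Complex ComplexConjugate

/-!
On the unit circle `z = e^{iθ}` the κ-gradient symbol collapses to `κ (cos θ - 1) + i sin θ`, and
a direct computation gives `|D|² - |N|² = C (1 + C) (1 - κ) (1 - cos θ)²` for the numerator `N`
and denominator `D` of the amplification factor. The right-hand side is nonnegative for `C ≥ 0`
and `κ ≤ 1`, so `|S| = |N| / |D| ≤ 1`.
-/

/-- The Fourier symbol of `2h ∂ₓᵏ` at `z = e^{iθ}`. -/
noncomputable def kappaSymbol (κ : ℝ) (z : ℂ) : ℂ :=
  ((1 - κ) * (1 - z⁻¹) + (1 + κ) * (z - 1)) / 2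

/-- The amplification factor `S` of the semi-implicit κ-scheme with Courant number `C`,
at `z = e^{iθ}`. -/
noncomputable def amplificationFactor (κ C : ℝ) (z : ℂ) : ℂ :=
  (1 - (C / 2 : ℝ) * kappaSymbol κ z) /
    (1 + (C : ℝ) * (1 - z⁻¹) - (C / 2 : ℝ) * z⁻¹ * kappaSymbol κ z)

theorem kappaSymbol_of_norm_eq_one (κ : ℝ) {z : ℂ} (hz : ‖z‖ = 1) :
    kappaSymbol κ z = κ * (z.re - 1) + z.im * I := by
  apply Complex.ext <;>
    simp only [kappaSymbol, inv_eq_conj hz, div_ofNat_re, div_ofNat_im, add_re, add_im, mul_re,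
      mul_im, sub_re, sub_im, one_re, one_im, ofReal_re, ofReal_im, conj_re, conj_im, I_re, I_im] <;>
    ring

theorem normSq_den_sub_normSq_num (κ C : ℝ) {z : ℂ} (hz : ‖z‖ = 1) :
    normSq (1 + (C : ℝ) * (1 - z⁻¹) - (C / 2 : ℝ) * z⁻¹ * kappaSymbol κ z) -
      normSq (1 - (C / 2 : ℝ) * kappaSymbol κ z) =
      C * (1 + C) * (1 - κ) * (1 - z.re) ^ 2 := by
  have hcircle : z.re * z.re + z.im * z.im = 1 := by
    rw [← normSq_apply, normSq_eq_norm_sq, hz, one_pow]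
  rw [kappaSymbol_of_norm_eq_one κ hz, inv_eq_conj hz]
  simp only [normSq_apply, sub_re, sub_im, add_re, add_im, mul_re, mul_im,
    one_re, one_im, ofReal_re, ofReal_im, conj_re, conj_im, I_re, I_im]
  -- the coefficient is the quotient of (goal's LHS - RHS) by `re² + im² - 1`, viewed in `im²`
  linear_combination (-C * (1 + C * (1 - z.re) + C / 2 * κ * z.re * (1 - z.re))
    + C ^ 2 / 4 * (2 - z.re - κ * (1 - z.re)) ^ 2 - C ^ 2 / 4
    + C ^ 2 / 4 * (z.im ^ 2 + 1 - z.re ^ 2)) * hcircle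

theorem norm_amplificationFactor_le_one {κ C : ℝ} (hκ : κ ≤ 1) (hC : 0 ≤ C) {z : ℂ}
    (hz : ‖z‖ = 1) : ‖amplificationFactor κ C z‖ ≤ 1 := by
  have hgap := normSq_den_sub_normSq_num κ C hz
  have hnonneg : 0 ≤ C * (1 + C) * (1 - κ) * (1 - z.re) ^ 2 := by
    have : 0 ≤ 1 - κ := sub_nonneg.mpr hκ
    positivity
  rw [amplificationFactor, norm_div]
  refine div_le_one_of_le₀ ?_ (norm_nonneg _)
  rw [norm_def, norm_def]
  exact Real.sqrt_le_sqrt (by linarith)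

/-- Unconditional von Neumann stability of the semi-implicit κ-scheme for V > 0 and κ ≤ 1:
|S(θ)| ≤ 1 for all θ and all Courant numbers C > 0. -/
theorem stmt9 (κ : ℝ) (hκ : κ ≤ 1) :
    ∀ (C θ : ℝ), 0 < C →
      ‖((1 - (C / 2 : ℝ) *
              (((1 - κ) * (1 - Complex.exp (-(Complex.I * θ))) +
                 (1 + κ) * (Complex.exp (Complex.I * θ) - 1)) / 2)) /
            (1 + (C : ℝ) * (1 - Complex.exp (-(Complex.I * θ))) -
              (C / 2 : ℝ) * Complex.exp (-(Complex.I * θ)) *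
                (((1 - κ) * (1 - Complex.exp (-(Complex.I * θ))) +
                   (1 + κ) * (Complex.exp (Complex.I * θ) - 1)) / 2)))‖ ≤ 1 := by
  intro C θ hC
  rw [Complex.exp_neg]
  exact norm_amplificationFactor_le_one hκ hC.le (norm_exp_I_mul_ofReal θ)
end
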